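/- arXiv:2501.07143 — 3 statements merged into one kernel-verified Lean document; each statement's English description precedes it below -/
import Mathlib

section
/- Let $\mu\in(0,1)$, $\Omega\subset\mathbb{R}^n$ a bounded domain with $C^1$ boundary, and $\rho\in C^1(\bar\Omega)\cap C^2(\Omega)$ a defining function with $\rho\Delta\rho$ (more precisely $\rho\nabla^2\rho$) continuous up to $\bar\Omega$ and vanishing on $\partial\Omega$, and $|\nabla\rho|=1$ on $\partial\Omega$. Then there exist positive constants $r$ and $K$, depending only on $n,\mu,\Omega,\rho$, such that for every $x_0\in\partial\Omega$ and every $x\in\Omega\cap B_r(x_0)$: $\Delta\big(|x-x_0|^\mu + K\rho(x)^\mu\big) \le 0$. -/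
open Set

noncomputable section

/-- Spatial partial derivative in the `i`-th coordinate direction. -/
def spd {n : ℕ} (f : EuclideanSpace ℝ (Fin n) → ℝ) (i : Fin n) :
    EuclideanSpace ℝ (Fin n) → ℝ :=
  fun x => fderiv ℝ f x (EuclideanSpace.single i 1)

/-!
Near `∂Ω` the hypotheses make `|∇ρ|` close to `1` and `ρ Δρ` close to `0`, uniformly by
compactness of `∂Ω`. Hence `Δ(K ρ^μ) = K μ ρ^(μ-2) ((μ-1) |∇ρ|² + ρ Δρ) ≤ -K μ (1-μ)/2 · ρ^(μ-2)`
there, and since `ρ x ≤ 2 |x - x₀|` by the mean value theorem, this negative term dominates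
`Δ |x - x₀|^μ = μ (n + μ - 2) |x - x₀|^(μ-2)` once `K` is large.
-/

open Metric Filter Topology

section PartialDerivatives

variable {n : ℕ} {f g : EuclideanSpace ℝ (Fin n) → ℝ} {x : EuclideanSpace ℝ (Fin n)}

theorem HasFDerivAt.spd_eq {f' : EuclideanSpace ℝ (Fin n) →L[ℝ] ℝ} (h : HasFDerivAt f f' x)
    (i : Fin n) : spd f i x = f' (EuclideanSpace.single i 1) := by
  rw [spd, h.fderiv]

theorem Filter.EventuallyEq.spd_eq (h : f =ᶠ[𝓝 x] g) (i : Fin n) : spd f i x = spd g i x := by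
  rw [spd, spd, h.fderiv_eq]

theorem ContDiffAt.differentiableAt_spd (hf : ContDiffAt ℝ 2 f x) (i : Fin n) :
    DifferentiableAt ℝ (spd f i) x :=
  ((hf.fderiv_right (m := 1) le_rfl).differentiableAt one_ne_zero).clm_apply
    (differentiableAt_const _)

theorem sum_sq_spd : ∑ i, spd f i x ^ 2 = ‖fderiv ℝ f x‖ ^ 2 := by
  simp only [spd]
  generalize fderiv ℝ f x = A
  obtain ⟨v, rfl⟩ := (InnerProductSpace.toDual ℝ (EuclideanSpace ℝ (Fin n))).surjective A
  rw [LinearIsometryEquiv.norm_map, EuclideanSpace.real_norm_sq_eq]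
  simp [EuclideanSpace.inner_single_right]

theorem spd_spd_add (i : Fin n) (hf : ContDiffAt ℝ 2 f x) (hg : ContDiffAt ℝ 2 g x) :
    spd (spd (fun y => f y + g y) i) i x = spd (spd f i) i x + spd (spd g i) i x := by
  have h : spd (fun y => f y + g y) i =ᶠ[𝓝 x] fun y => spd f i y + spd g i y := by
    filter_upwards [hf.eventually (by simp), hg.eventually (by simp)] with y hfy hgy
    exact ((hfy.differentiableAt two_ne_zero).hasFDerivAt.add
      (hgy.differentiableAt two_ne_zero).hasFDerivAt).spd_eq i
  exact h.spd_eq i ▸ ((hf.differentiableAt_spd i).hasFDerivAt.add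
    (hg.differentiableAt_spd i).hasFDerivAt).spd_eq i

theorem spd_spd_comp (i : Fin n) {φ φ' : ℝ → ℝ} {φ'' : ℝ}
    (hφ : ∀ᶠ t in 𝓝 (g x), HasDerivAt φ (φ' t) t) (hφ' : HasDerivAt φ' φ'' (g x))
    (hg : ContDiffAt ℝ 2 g x) :
    spd (spd (fun y => φ (g y)) i) i x
      = φ'' * spd g i x ^ 2 + φ' (g x) * spd (spd g i) i x := by
  have h : spd (fun y => φ (g y)) i =ᶠ[𝓝 x] fun y => φ' (g y) * spd g i y := by
    filter_upwards [hg.continuousAt.eventually hφ, hg.eventually (by simp)] with y hφy hgy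
    exact (hφy.comp_hasFDerivAt y (hgy.differentiableAt two_ne_zero).hasFDerivAt).spd_eq i
  have h' := ((hφ'.comp_hasFDerivAt x (hg.differentiableAt two_ne_zero).hasFDerivAt).mul
    (hg.differentiableAt_spd i).hasFDerivAt).spd_eq i
  rw [h.spd_eq]
  refine h'.trans ?_
  simp only [add_apply, smul_apply, smul_eq_mul, Function.comp_apply]
  rw [spd, spd]
  ring

theorem spd_spd_const_mul_rpow (i : Fin n) (K p : ℝ) (hg : ContDiffAt ℝ 2 g x) (hpos : 0 < g x) :
    spd (spd (fun y => K * g y ^ p) i) i x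
      = K * p * g x ^ (p - 2) * ((p - 1) * spd g i x ^ 2 + g x * spd (spd g i) i x) := by
  have hφ : ∀ᶠ t in 𝓝 (g x), HasDerivAt (fun t => K * t ^ p) (K * (p * t ^ (p - 1))) t := by
    filter_upwards [lt_mem_nhds hpos] with t ht
    exact (Real.hasDerivAt_rpow_const (Or.inl ht.ne')).const_mul K
  have hφ' := ((Real.hasDerivAt_rpow_const (p := p - 1) (Or.inl hpos.ne')).const_mul p).const_mul K
  rw [spd_spd_comp i hφ hφ' hg, show p - 1 - 1 = p - 2 by ring,
    show p - 1 = p - 2 + 1 by ring, Real.rpow_add_one hpos.ne']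
  ring

theorem sum_spd_spd_const_mul_rpow (K p : ℝ) (hg : ContDiffAt ℝ 2 g x) (hpos : 0 < g x) :
    ∑ i, spd (spd (fun y => K * g y ^ p) i) i x
      = K * p * g x ^ (p - 2) * ((p - 1) * ‖fderiv ℝ g x‖ ^ 2 + g x * ∑ i, spd (spd g i) i x) := by
  simp only [spd_spd_const_mul_rpow _ K p hg hpos, ← sum_sq_spd, Finset.mul_sum,
    ← Finset.sum_add_distrib]

theorem spd_norm_sub_sq (c : EuclideanSpace ℝ (Fin n)) (i : Fin n) :
    spd (fun y => ‖y - c‖ ^ 2) i = fun y => 2 * (y i - c i) := funext fun y => by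
  refine (((hasFDerivAt_id y).sub_const c).norm_sq.spd_eq i).trans ?_
  simp [EuclideanSpace.inner_single_right]

theorem sum_spd_spd_norm_sub_rpow (c : EuclideanSpace ℝ (Fin n)) (μ : ℝ) (hx : x ≠ c) :
    ∑ i, spd (spd (fun y => ‖y - c‖ ^ μ) i) i x = μ * (n + μ - 2) * ‖x - c‖ ^ (μ - 2) := by
  have hA : 0 < ‖x - c‖ := norm_pos_iff.2 (sub_ne_zero.2 hx)
  have hgrad : ‖fderiv ℝ (fun y => ‖y - c‖ ^ 2) x‖ ^ 2 = 4 * ‖x - c‖ ^ 2 := by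
    rw [← sum_sq_spd, EuclideanSpace.real_norm_sq_eq, Finset.mul_sum]
    norm_num [spd_norm_sub_sq, mul_pow]
  have hlap : ∑ i, spd (spd (fun y => ‖y - c‖ ^ 2) i) i x = 2 * n := by
    have h2 : ∀ i, spd (spd (fun y => ‖y - c‖ ^ 2) i) i x = 2 := fun i => by
      have hd : HasFDerivAt (fun y : EuclideanSpace ℝ (Fin n) => 2 * (y i - c i))
          ((2 : ℝ) • EuclideanSpace.proj i) x :=
        (((EuclideanSpace.proj (𝕜 := ℝ) i).hasFDerivAt (x := x)).sub_const (c i)).const_mul 2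
      rw [spd_norm_sub_sq, hd.spd_eq]
      simp
    simp [h2, mul_comm]
  have hfun : (fun y => ‖y - c‖ ^ μ) = fun y => 1 * (‖y - c‖ ^ 2) ^ (μ / 2) := funext fun y => by
    rw [one_mul, ← Real.rpow_natCast, ← Real.rpow_mul (norm_nonneg _)]
    ring_nf
  have hpow : (‖x - c‖ ^ 2) ^ (μ / 2 - 2) * ‖x - c‖ ^ 2 = ‖x - c‖ ^ (μ - 2) := by
    rw [← Real.rpow_natCast, ← Real.rpow_mul hA.le, ← Real.rpow_add hA]
    congr 1
    push_cast
    ring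
  have hC2 : ContDiffAt ℝ 2 (fun y => ‖y - c‖ ^ 2) x :=
    ((contDiff_norm_sq ℝ).comp (contDiff_id.sub contDiff_const)).contDiffAt
  rw [hfun, sum_spd_spd_const_mul_rpow 1 (μ / 2) hC2 (by positivity), hlap, hgrad, ← hpow]
  ring

theorem sum_spd_spd_norm_sub_rpow_add_const_mul_rpow (c : EuclideanSpace ℝ (Fin n)) (μ K : ℝ)
    (hx : x ≠ c) (hg : ContDiffAt ℝ 2 g x) (hpos : 0 < g x) :
    ∑ i, spd (spd (fun y => ‖y - c‖ ^ μ + K * g y ^ μ) i) i x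
      = μ * (n + μ - 2) * ‖x - c‖ ^ (μ - 2)
        + K * μ * g x ^ (μ - 2)
          * ((μ - 1) * ‖fderiv ℝ g x‖ ^ 2 + g x * ∑ i, spd (spd g i) i x) := by
  have hxc : x - c ≠ 0 := sub_ne_zero.2 hx
  have hc : ContDiffAt ℝ 2 (fun y => ‖y - c‖ ^ μ) x :=
    ((contDiffAt_norm ℝ hxc).comp x (contDiffAt_id.sub contDiffAt_const)).rpow_const_of_ne
      (norm_ne_zero_iff.2 hxc)
  have hK : ContDiffAt ℝ 2 (fun y => K * g y ^ μ) x :=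
    contDiffAt_const.mul (hg.rpow_const_of_ne hpos.ne')
  rw [Finset.sum_congr rfl fun i _ => spd_spd_add i hc hK, Finset.sum_add_distrib,
    sum_spd_spd_norm_sub_rpow c μ hx, sum_spd_spd_const_mul_rpow K μ hg hpos]

end PartialDerivatives

theorem ContDiffWithinAt.exists_tendsto_fderivWithin {𝕜 E F : Type*} [NontriviallyNormedField 𝕜]
    [NormedAddCommGroup E] [NormedSpace 𝕜 E] [NormedAddCommGroup F] [NormedSpace 𝕜 F]
    {f : E → F} {s : Set E} {a : E} (hf : ContDiffWithinAt 𝕜 1 f s a) (ha : a ∈ s) :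
    ∃ D, Tendsto (fderivWithin 𝕜 f s) (𝓝[{y ∈ s | UniqueDiffWithinAt 𝕜 s y}] a) (𝓝 D) := by
  rw [← zero_add 1, contDiffWithinAt_succ_iff_hasFDerivWithinAt' (by simp)] at hf
  obtain ⟨u, hu, -, -, f', hf', hf'a⟩ := hf
  rw [insert_eq_of_mem ha] at hu
  refine ⟨f' a, (hf'a.continuousWithinAt.mono (sep_subset _ _)).tendsto.congr' ?_⟩
  filter_upwards [nhdsWithin_mono a (sep_subset _ _) hu, self_mem_nhdsWithin] with y hyu hy
  exact ((hf' y hyu).fderivWithin hy.2).symm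

theorem IsCompact.exists_forall_dist_lt_of_eventually_nhdsWithin {X : Type*} [PseudoMetricSpace X]
    {K s : Set X} (hK : IsCompact K) {p : X → Prop} (h : ∀ a ∈ K, ∀ᶠ x in 𝓝[s] a, p x) :
    ∃ r > 0, ∀ x ∈ s, ∀ a ∈ K, dist x a < r → p x := by
  obtain ⟨r, hr, hrK⟩ := (hasBasis_nhdsSet_thickening hK).eventually_iff.1
    (eventually_nhdsSet_iff_forall.2 fun a ha => eventually_nhdsWithin_iff.1 (h a ha))
  exact ⟨r, hr, fun x hx a ha hxa => hrK (mem_thickening_iff.2 ⟨a, ha, hxa⟩) hx⟩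

section Boundary

variable {E : Type*} [NormedAddCommGroup E] [NormedSpace ℝ E] {Ω : Set E}

theorem uniqueDiffWithinAt_of_infDist_compl_eq_dist {z y : E} (hz : z ∈ Ω) (hy : y ∉ Ω)
    (hzy : infDist z Ωᶜ = dist z y) : UniqueDiffWithinAt ℝ Ω y := by
  have hpos : 0 < dist z y := dist_pos.2 (ne_of_mem_of_not_mem hz hy)
  have hball : ball z (dist z y) ⊆ Ω := hzy ▸ ball_infDist_compl_subset
  refine (uniqueDiffWithinAt_convex (convex_ball z _) ⟨z, ?_⟩ ?_).mono hball
  · rw [isOpen_ball.interior_eq]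
    exact mem_ball_self hpos
  · rw [closure_ball z hpos.ne', mem_closedBall, dist_comm]

theorem frontier_subset_closure_uniqueDiffWithinAt [FiniteDimensional ℝ E] (hΩ : IsOpen Ω) :
    frontier Ω ⊆ closure {y ∈ frontier Ω | UniqueDiffWithinAt ℝ Ω y} := by
  intro a ha
  have haΩ : a ∉ Ω := fun h => (hΩ.frontier_eq ▸ ha).2 h
  rw [Metric.mem_closure_iff]
  intro ε hε
  obtain ⟨z, hzΩ, hza⟩ :=
    Metric.mem_closure_iff.1 (frontier_subset_closure ha) (ε / 2) (half_pos hε)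
  obtain ⟨y, hy, hzy⟩ := exists_mem_frontier_infDist_compl_eq_dist hzΩ fun h => haΩ (h ▸ mem_univ a)
  refine ⟨y, ⟨hy, uniqueDiffWithinAt_of_infDist_compl_eq_dist hzΩ (hΩ.frontier_eq ▸ hy).2 hzy⟩, ?_⟩
  calc dist a y ≤ dist a z + dist z y := dist_triangle _ _ _
    _ ≤ dist a z + dist z a := by gcongr; exact hzy ▸ infDist_le_dist_of_mem haΩ
    _ < ε := by rw [dist_comm z a]; linarith

theorem tendsto_norm_fderiv_nhdsWithin_frontier [FiniteDimensional ℝ E]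
    {F : Type*} [NormedAddCommGroup F] [NormedSpace ℝ F] {ρ : E → F} {c : ℝ} (hΩ : IsOpen Ω)
    (hρ : ContDiffOn ℝ 1 ρ (closure Ω))
    (hgrad : ∀ y ∈ frontier Ω, ‖fderivWithin ℝ ρ (closure Ω) y‖ = c) {a : E}
    (ha : a ∈ frontier Ω) : Tendsto (fun x => ‖fderiv ℝ ρ x‖) (𝓝[Ω] a) (𝓝 c) := by
  set U := {y ∈ closure Ω | UniqueDiffWithinAt ℝ (closure Ω) y}
  obtain ⟨D, hD⟩ := (hρ a (frontier_subset_closure ha)).exists_tendsto_fderivWithin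
    (frontier_subset_closure ha)
  have hΩU : Ω ⊆ U := fun x hx =>
    ⟨subset_closure hx, (hΩ.uniqueDiffWithinAt hx).mono subset_closure⟩
  have hBU : {y ∈ frontier Ω | UniqueDiffWithinAt ℝ Ω y} ⊆ U := fun y hy =>
    ⟨frontier_subset_closure hy.1, uniqueDiffWithinAt_closure.2 hy.2⟩
  -- `closure Ω` need not have unique derivatives at `a`, so `‖D‖` is read off at the boundary
  -- points that are nearest points of interior points: there it does, and they accumulate at `a`.
  have hD_norm : ‖D‖ = c := by
    have := mem_closure_iff_nhdsWithin_neBot.1 (frontier_subset_closure_uniqueDiffWithinAt hΩ ha)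
    refine tendsto_nhds_unique (hD.mono_left (nhdsWithin_mono a hBU)).norm ?_
    exact tendsto_const_nhds.congr'
      (eventually_nhdsWithin_of_forall fun y hy => (hgrad y hy.1).symm)
  rw [← hD_norm]
  refine ((hD.mono_left (nhdsWithin_mono a hΩU)).congr' ?_).norm
  filter_upwards [self_mem_nhdsWithin] with x hx
  exact fderivWithin_of_mem_nhds (mem_of_superset (hΩ.mem_nhds hx) subset_closure)

theorem le_mul_dist_of_mem_frontier [FiniteDimensional ℝ E] {ρ : E → ℝ} (hΩ : IsOpen Ω)
    (hρ : ContDiffOn ℝ 1 ρ (closure Ω)) (hρ0 : ∀ y ∈ frontier Ω, ρ y = 0) {L : ℝ}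
    (hgrad : ∀ y ∈ frontier Ω, ‖fderivWithin ℝ ρ (closure Ω) y‖ ≤ L) {x x0 : E} (hx : x ∈ Ω)
    (hx0 : x0 ∈ frontier Ω) (hL : ∀ p ∈ Ω ∩ closedBall x (dist x x0), ‖fderiv ℝ ρ p‖ ≤ L) :
    ρ x ≤ L * dist x x0 := by
  have hx0Ω : x0 ∉ Ω := (hΩ.frontier_eq ▸ hx0).2
  obtain ⟨y, hy, hxy⟩ :=
    exists_mem_frontier_infDist_compl_eq_dist hx fun h => hx0Ω (h ▸ mem_univ x0)
  have hdist : dist x y ≤ dist x x0 := hxy ▸ infDist_le_dist_of_mem hx0Ω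
  have hball : closedBall x (dist x y) ⊆ closure Ω :=
    hxy ▸ closedBall_infDist_compl_subset_closure hx
  have hbound : ∀ p ∈ closedBall x (dist x y), ‖fderivWithin ℝ ρ (closure Ω) p‖ ≤ L := by
    intro p hp
    by_cases hpΩ : p ∈ Ω
    · rw [fderivWithin_of_mem_nhds (mem_of_superset (hΩ.mem_nhds hpΩ) subset_closure)]
      exact hL p ⟨hpΩ, closedBall_subset_closedBall hdist hp⟩
    · exact hgrad p ⟨hball hp, hΩ.interior_eq.symm ▸ hpΩ⟩
  have hmvt := (convex_closedBall x _).norm_image_sub_le_of_norm_hasFDerivWithin_le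
    (fun p hp => ((hρ.differentiableOn one_ne_zero p (hball hp)).hasFDerivWithinAt).mono hball)
    hbound (by rw [mem_closedBall, dist_comm]) (mem_closedBall_self dist_nonneg)
  rw [hρ0 y hy, sub_zero, ← dist_eq_norm] at hmvt
  calc ρ x ≤ L * dist x y := (le_abs_self _).trans hmvt
    _ ≤ L * dist x x0 := by
      gcongr
      exact (norm_nonneg _).trans (hgrad y hy)

end Boundary

/-- With `R ≤ 2A` we get `R ^ (μ - 2) ≥ A ^ (μ - 2) / 4`, and the bracket is at most `(μ - 1) / 2`;
the factor `8 (n + 1) / (1 - μ)` then makes the second term at most `-(n + 1) μ A ^ (μ - 2)`. -/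
theorem barrier_le_zero {n : ℕ} {μ A R S T : ℝ} (hμ0 : 0 < μ) (hμ1 : μ < 1) (hA : 0 < A)
    (hR : 0 < R) (hRA : R ≤ 2 * A) (hS : 3 / 4 ≤ S) (hT : T ≤ (1 - μ) / 4) :
    μ * (n + μ - 2) * A ^ (μ - 2) + 8 * (n + 1) / (1 - μ) * μ * R ^ (μ - 2) * ((μ - 1) * S + T)
      ≤ 0 := by
  have hP : 0 < A ^ (μ - 2) := Real.rpow_pos_of_pos hA _
  have hQ : A ^ (μ - 2) / 4 ≤ R ^ (μ - 2) := calc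
    A ^ (μ - 2) / 4 = (2 : ℝ) ^ (-2 : ℝ) * A ^ (μ - 2) := by norm_num; ring
    _ ≤ 2 ^ (μ - 2) * A ^ (μ - 2) := by gcongr <;> linarith
    _ = (2 * A) ^ (μ - 2) := (Real.mul_rpow zero_le_two hA.le).symm
    _ ≤ R ^ (μ - 2) := Real.rpow_le_rpow_of_nonpos hR hRA (by linarith)
  have hK : 8 * (n + 1) / (1 - μ) * μ * ((μ - 1) / 2) = -(4 * (n + 1) * μ) := by
    field_simp [(sub_pos.2 hμ1).ne']
    ring
  have hbracket : (μ - 1) * S + T ≤ (μ - 1) / 2 := by nlinarith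
  calc _ ≤ μ * (n + μ - 2) * A ^ (μ - 2)
          + 8 * (n + 1) / (1 - μ) * μ * R ^ (μ - 2) * ((μ - 1) / 2) := by gcongr
    _ = μ * (n + μ - 2) * A ^ (μ - 2) - 4 * (n + 1) * μ * R ^ (μ - 2) := by
        linear_combination R ^ (μ - 2) * hK
    _ ≤ 0 := by
        nlinarith [mul_le_mul_of_nonneg_left hQ (by positivity : (0 : ℝ) ≤ 4 * (n + 1) * μ),
          mul_pos hμ0 hP]

theorem stmt_5_general {n : ℕ}
    (μ : ℝ) (hμ : μ ∈ Ioo (0:ℝ) 1)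
    (Ω : Set (EuclideanSpace ℝ (Fin n)))
    (hΩopen : IsOpen Ω) (hΩbdd : Bornology.IsBounded Ω)
    (ρ : EuclideanSpace ℝ (Fin n) → ℝ)
    (hρC1 : ContDiffOn ℝ 1 ρ (closure Ω))
    (hρC2 : ContDiffOn ℝ 2 ρ Ω)
    (hρpos : ∀ x ∈ Ω, 0 < ρ x)
    (hρ0 : ∀ x ∈ frontier Ω, ρ x = 0)
    -- `|∇ρ| = 1` on `∂Ω`
    (hρgrad : ∀ x ∈ frontier Ω, ‖fderivWithin ℝ ρ (closure Ω) x‖ = 1)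
    -- `ρ ∇²ρ` extends continuously to `closure Ω` and vanishes on `∂Ω`
    (hρhess : ∀ i j, ∃ g : EuclideanSpace ℝ (Fin n) → ℝ,
      ContinuousOn g (closure Ω) ∧
      (∀ x ∈ Ω, g x = ρ x * spd (spd ρ j) i x) ∧
      (∀ x ∈ frontier Ω, g x = 0)) :
    ∃ r > 0, ∃ K > 0, ∀ x0 ∈ frontier Ω, ∀ x ∈ Ω ∩ Metric.ball x0 r,
      (∑ i, spd (spd (fun y => ‖y - x0‖ ^ μ + K * ρ y ^ μ) i) i x) ≤ 0 := by
  obtain ⟨hμ0, hμ1⟩ := hμ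
  choose g hg_cont hg_eq hg_zero using hρhess
  have hG : ∀ a ∈ frontier Ω, Tendsto (fun x => ∑ i, g i i x) (𝓝[Ω] a) (𝓝 0) := fun a ha => by
    have hGc : ContinuousOn (fun x => ∑ i, g i i x) (closure Ω) :=
      continuousOn_finsetSum _ fun i _ => hg_cont i i
    simpa only [hg_zero _ _ a ha, Finset.sum_const_zero] using
      ((hGc a (frontier_subset_closure ha)).mono subset_closure).tendsto
  -- `7/8 < |∇ρ|` gives `|∇ρ|² ≥ 3/4`, `|∇ρ| < 2` gives `ρ x ≤ 2 |x - x0|`; the radius is halved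
  -- so that the ball used in the mean value theorem stays within `r` of `x0`.
  obtain ⟨r, hr, hnear⟩ :=
    (hΩbdd.isCompact_closure.of_isClosed_subset isClosed_frontier frontier_subset_closure
      ).exists_forall_dist_lt_of_eventually_nhdsWithin fun a ha =>
      ((tendsto_norm_fderiv_nhdsWithin_frontier hΩopen hρC1 hρgrad ha).eventually
        (Ioo_mem_nhds (by norm_num : (7 / 8 : ℝ) < 1) one_lt_two)).and
      ((hG a ha).eventually (gt_mem_nhds (by linarith : (0 : ℝ) < (1 - μ) / 4)))
  refine ⟨r / 2, half_pos hr, 8 * (n + 1) / (1 - μ), by have := sub_pos.2 hμ1; positivity,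
    fun x0 hx0 x ⟨hxΩ, hx⟩ => ?_⟩
  have hxx0 : dist x x0 < r / 2 := hx
  have hρx : ρ x ≤ 2 * dist x x0 :=
    le_mul_dist_of_mem_frontier hΩopen hρC1 hρ0 (fun z hz => (hρgrad z hz).trans_le one_le_two)
      hxΩ hx0 fun p ⟨hpΩ, hp⟩ =>
        (hnear p hpΩ x0 hx0 (by linarith [dist_triangle p x x0, mem_closedBall.1 hp])).1.2.le
  have hx_ne : x ≠ x0 := ne_of_mem_of_not_mem hxΩ (hΩopen.frontier_eq ▸ hx0).2
  rw [sum_spd_spd_norm_sub_rpow_add_const_mul_rpow x0 μ _ hx_ne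
    ((hρC2 x hxΩ).contDiffAt (hΩopen.mem_nhds hxΩ)) (hρpos x hxΩ)]
  simp only [Finset.mul_sum, ← hg_eq _ _ x hxΩ]
  obtain ⟨⟨hgrad_lo, -⟩, hGx⟩ := hnear x hxΩ x0 hx0 (by linarith)
  exact barrier_le_zero hμ0 hμ1 (norm_pos_iff.2 (sub_ne_zero.2 hx_ne)) (hρpos x hxΩ)
    (dist_eq_norm x x0 ▸ hρx) (by nlinarith) hGx.le

/-- For `μ ∈ (0,1)` there exist `r, K > 0` such that
`Δ(|x-x₀|^μ + K ρ(x)^μ) ≤ 0` for every `x₀ ∈ ∂Ω` and `x ∈ Ω ∩ B_r(x₀)`. -/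
theorem stmt_5 {n : ℕ}
    (μ : ℝ) (hμ : μ ∈ Ioo (0:ℝ) 1)
    (Ω : Set (EuclideanSpace ℝ (Fin n)))
    (hΩopen : IsOpen Ω) (hΩbdd : Bornology.IsBounded Ω) (hΩne : Ω.Nonempty)
    (ρ : EuclideanSpace ℝ (Fin n) → ℝ)
    (hρC1 : ContDiffOn ℝ 1 ρ (closure Ω))
    (hρC2 : ContDiffOn ℝ 2 ρ Ω)
    (hρpos : ∀ x ∈ Ω, 0 < ρ x)
    (hρ0 : ∀ x ∈ frontier Ω, ρ x = 0)
    -- `|∇ρ| = 1` on `∂Ω`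
    (hρgrad : ∀ x ∈ frontier Ω, ‖fderivWithin ℝ ρ (closure Ω) x‖ = 1)
    -- `ρ ∇²ρ` extends continuously to `closure Ω` and vanishes on `∂Ω`
    (hρhess : ∀ i j, ∃ g : EuclideanSpace ℝ (Fin n) → ℝ,
      ContinuousOn g (closure Ω) ∧
      (∀ x ∈ Ω, g x = ρ x * spd (spd ρ j) i x) ∧
      (∀ x ∈ frontier Ω, g x = 0)) :
    ∃ r > 0, ∃ K > 0, ∀ x0 ∈ frontier Ω, ∀ x ∈ Ω ∩ Metric.ball x0 r,
      (∑ i, spd (spd (fun y => ‖y - x0‖ ^ μ + K * ρ y ^ μ) i) i x) ≤ 0 :=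
  stmt_5_general μ hμ Ω hΩopen hΩbdd ρ hρC1 hρC2 hρpos hρ0 hρgrad hρhess

end
end

section
/- Let $c, f$ be bounded continuous functions on $S = \partial\Omega\times[0,\infty)$, $\bar c,\bar f,\phi$ continuous on $\partial\Omega$ with $\bar c < 0$ on $\partial\Omega$, and define $h(x,t) = \phi(x)e^{\int_0^t c(x,s)ds} - \int_0^t e^{\int_s^t c(x,\tau)d\tau} f(x,s)\,ds$. If $c(\cdot,t)\to\bar c$ and $f(\cdot,t)\to\bar f$ in $L^\infty(\partial\Omega)$ as $t\to\infty$, then $h(\cdot,t)\to \bar f/\bar c$ in $L^\infty(\partial\Omega)$ as $t\to\infty$. -/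
/-!
With `G(s) = ∫ₛᵗ c`, the identity `∂ₛ e^{G(s)} = -c(s) e^{G(s)}` gives
`∫₀ᵗ c(s) e^{G(s)} ds = e^{G(0)} - 1`, so for every constant `r`
`h - r = (φ - r) e^{G(0)} - ∫₀ᵗ e^{G(s)} (f(s) - r c(s)) ds`.
For `r = f̄/c̄` the new forcing `f - r c = (f - f̄) - r (c - c̄)` is uniformly small after a time
`T`, where also `c ≤ -c₀/2`; hence the integral over `[T, t]` is small, while the first term and the
integral over `[0, T]` carry the factor `e^{MT - c₀(t - T)/2} → 0`. Compactness of `∂Ω` makes `c₀`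
and the bound on `φ` uniform.
-/

open Set Filter Topology MeasureTheory intervalIntegral

noncomputable section

/-- The solution of `y' = g y - p`, `y 0 = φ`, by variation of constants. -/
def duhamel (φ : ℝ) (g p : ℝ → ℝ) (t : ℝ) : ℝ :=
  φ * Real.exp (∫ s in (0 : ℝ)..t, g s) - ∫ s in (0 : ℝ)..t, Real.exp (∫ τ in s..t, g τ) * p s

theorem duhamel_congr {φ t : ℝ} {g g' p p' : ℝ → ℝ} (ht : 0 ≤ t)
    (hg : ∀ s ∈ Icc 0 t, g s = g' s) (hp : ∀ s ∈ Icc 0 t, p s = p' s) :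
    duhamel φ g p t = duhamel φ g' p' t := by
  have hint : ∀ a ∈ Icc 0 t, ∫ τ in a..t, g τ = ∫ τ in a..t, g' τ := fun a ha =>
    integral_congr fun τ hτ => hg τ ⟨ha.1.trans (uIcc_of_le ha.2 ▸ hτ).1, (uIcc_of_le ha.2 ▸ hτ).2⟩
  unfold duhamel
  rw [hint 0 ⟨le_rfl, ht⟩]
  congr 1
  refine integral_congr fun s hs => ?_
  rw [uIcc_of_le ht] at hs
  rw [hint s hs, hp s hs]

section

variable {g : ℝ → ℝ}

theorem hasDerivAt_exp_integral_left (hg : Continuous g) (s t : ℝ) :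
    HasDerivAt (fun u => Real.exp (∫ τ in u..t, g τ))
      (-(g s * Real.exp (∫ τ in s..t, g τ))) s := by
  convert (integral_hasDerivAt_left (hg.intervalIntegrable s t)
    (hg.stronglyMeasurableAtFilter _ _) hg.continuousAt).exp using 1
  ring

theorem continuous_exp_integral_left (hg : Continuous g) (t : ℝ) :
    Continuous fun s => Real.exp (∫ τ in s..t, g τ) :=
  continuous_iff_continuousAt.2 fun s => (hasDerivAt_exp_integral_left hg s t).continuousAt

theorem integral_mul_exp_integral (hg : Continuous g) (a t : ℝ) :
    ∫ s in a..t, g s * Real.exp (∫ τ in s..t, g τ) = Real.exp (∫ τ in a..t, g τ) - 1 := by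
  have := integral_eq_sub_of_hasDerivAt (fun s _ => hasDerivAt_exp_integral_left hg s t)
    ((hg.mul (continuous_exp_integral_left hg t)).neg.intervalIntegrable a t)
  rw [intervalIntegral.integral_neg, integral_same, Real.exp_zero] at this
  linarith

theorem integral_exp_integral_le {a t k : ℝ} (hg : Continuous g) (hk : 0 < k) (hat : a ≤ t)
    (hneg : ∀ s ∈ Icc a t, g s ≤ -k) :
    ∫ s in a..t, Real.exp (∫ τ in s..t, g τ) ≤ 1 / k := by
  have hF := continuous_exp_integral_left hg t
  -- `k e^G ≤ -g e^G`, and the latter integrates to `1 - e^{G(a)}`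
  have : k * ∫ s in a..t, Real.exp (∫ τ in s..t, g τ) ≤ 1 - Real.exp (∫ τ in a..t, g τ) :=
    calc k * ∫ s in a..t, Real.exp (∫ τ in s..t, g τ)
        = ∫ s in a..t, k * Real.exp (∫ τ in s..t, g τ) :=
          (intervalIntegral.integral_const_mul _ _).symm
      _ ≤ ∫ s in a..t, -(g s * Real.exp (∫ τ in s..t, g τ)) :=
          integral_mono_on hat ((hF.const_mul k).intervalIntegrable a t)
            ((hg.mul hF).neg.intervalIntegrable a t) fun s hs => by
              nlinarith [hneg s hs, Real.exp_pos (∫ τ in s..t, g τ)]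
      _ = 1 - Real.exp (∫ τ in a..t, g τ) := by
          rw [intervalIntegral.integral_neg, integral_mul_exp_integral hg]; ring
  rw [le_div_iff₀ hk]
  linarith [Real.exp_pos (∫ τ in a..t, g τ)]

theorem integral_le_of_abs_le_of_le_neg {M k s T t : ℝ} (hg : Continuous g)
    (hgM : ∀ τ, |g τ| ≤ M) (hneg : ∀ τ ∈ Icc T t, g τ ≤ -k) (hs : 0 ≤ s) (hsT : s ≤ T)
    (hTt : T ≤ t) :
    ∫ τ in s..t, g τ ≤ M * T - k * (t - T) := by
  have hM : 0 ≤ M := (abs_nonneg _).trans (hgM 0)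
  have h₁ : ∫ τ in s..T, g τ ≤ M * (T - s) := by
    simpa [mul_comm] using integral_mono_on hsT (hg.intervalIntegrable s T)
      (intervalIntegrable_const (μ := volume) (c := M)) fun τ _ => (le_abs_self _).trans (hgM τ)
  have h₂ : ∫ τ in T..t, g τ ≤ -k * (t - T) := by
    simpa [mul_comm] using integral_mono_on hTt (hg.intervalIntegrable T t)
      (intervalIntegrable_const (μ := volume) (c := -k)) hneg
  rw [← integral_add_adjacent_intervals (hg.intervalIntegrable s T) (hg.intervalIntegrable T t)]
  nlinarith

end

section

variable {g p : ℝ → ℝ}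

theorem duhamel_sub_const (hg : Continuous g) (hp : Continuous p) (φ r t : ℝ) :
    duhamel φ g p t - r = duhamel (φ - r) g (fun s => p s - r * g s) t := by
  have hF := continuous_exp_integral_left hg t
  have hsplit : ∫ s in (0 : ℝ)..t, Real.exp (∫ τ in s..t, g τ) * (p s - r * g s)
      = (∫ s in (0 : ℝ)..t, Real.exp (∫ τ in s..t, g τ) * p s)
        - r * ∫ s in (0 : ℝ)..t, g s * Real.exp (∫ τ in s..t, g τ) := by
    rw [← intervalIntegral.integral_const_mul, ← intervalIntegral.integral_sub]
    · congr 1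
      ext s
      ring
    · exact (hF.mul hp).intervalIntegrable 0 t
    · exact ((hg.mul hF).const_mul r).intervalIntegrable 0 t
  unfold duhamel
  rw [hsplit, integral_mul_exp_integral hg]
  ring

theorem abs_duhamel_le {ψ M B k δ T t : ℝ} (hg : Continuous g) (hp : Continuous p) (hk : 0 < k)
    (hT : 0 ≤ T) (hTt : T ≤ t) (hgM : ∀ s, |g s| ≤ M) (hpB : ∀ s, |p s| ≤ B)
    (hneg : ∀ s, T ≤ s → g s ≤ -k) (hpδ : ∀ s, T ≤ s → |p s| ≤ δ) :
    |duhamel ψ g p t| ≤ (|ψ| + T * B) * Real.exp (M * T - k * (t - T)) + δ / k := by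
  set E := Real.exp (M * T - k * (t - T))
  set F := fun s => Real.exp (∫ τ in s..t, g τ)
  have hF : Continuous F := continuous_exp_integral_left hg t
  have hnegI : ∀ s ∈ Icc T t, g s ≤ -k := fun s hs => hneg s hs.1
  have hFE : ∀ s ∈ Icc 0 T, F s ≤ E := fun s hs =>
    Real.exp_le_exp.2 (integral_le_of_abs_le_of_le_neg hg hgM hnegI hs.1 hs.2 hTt)
  have hB : 0 ≤ B := (abs_nonneg _).trans (hpB 0)
  have hδ : 0 ≤ δ := (abs_nonneg _).trans (hpδ T le_rfl)
  have h₀ : |ψ * F 0| ≤ |ψ| * E := by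
    rw [abs_mul, abs_of_pos (Real.exp_pos _)]
    exact mul_le_mul_of_nonneg_left (hFE 0 ⟨le_rfl, hT⟩) (abs_nonneg ψ)
  have h₁ : |∫ s in (0 : ℝ)..T, F s * p s| ≤ T * B * E := by
    have := intervalIntegral.norm_integral_le_of_norm_le_const (a := 0) (b := T)
      (C := B * E) (f := fun s => F s * p s) fun s hs => by
        rw [uIoc_of_le hT] at hs
        rw [Real.norm_eq_abs, abs_mul, abs_of_pos (Real.exp_pos _), mul_comm]
        exact mul_le_mul (hpB s) (hFE s (Ioc_subset_Icc_self hs)) (Real.exp_pos _).le hB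
    rw [sub_zero, abs_of_nonneg hT] at this
    simpa only [Real.norm_eq_abs, mul_comm T, mul_assoc] using this
  have h₂ : |∫ s in T..t, F s * p s| ≤ δ / k :=
    calc |∫ s in T..t, F s * p s|
        ≤ ∫ s in T..t, |F s * p s| := intervalIntegral.abs_integral_le_integral_abs hTt
      _ ≤ ∫ s in T..t, δ * F s :=
          integral_mono_on hTt ((hF.mul hp).abs.intervalIntegrable T t)
            ((hF.const_mul δ).intervalIntegrable T t) fun s hs => by
              rw [abs_mul, abs_of_pos (Real.exp_pos _), mul_comm]
              exact mul_le_mul_of_nonneg_right (hpδ s hs.1) (Real.exp_pos _).le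
      _ ≤ δ * (1 / k) := by
          rw [intervalIntegral.integral_const_mul]
          exact mul_le_mul_of_nonneg_left (integral_exp_integral_le hg hk hTt hnegI) hδ
      _ = δ / k := mul_one_div δ k
  have hsplit := integral_add_adjacent_intervals (μ := volume) (f := fun s => F s * p s)
    ((hF.mul hp).intervalIntegrable 0 T)
    ((hF.mul hp).intervalIntegrable T t)
  unfold duhamel
  change |ψ * F 0 - ∫ s in (0 : ℝ)..t, F s * p s| ≤ _
  rw [← hsplit]
  calc _ ≤ |ψ * F 0| + (|∫ s in (0 : ℝ)..T, F s * p s| + |∫ s in T..t, F s * p s|) :=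
        (abs_sub _ _).trans (add_le_add le_rfl (abs_add_le _ _))
    _ ≤ _ := by linarith

end

theorem abs_le_of_eventually_abs_sub_le {u : ℝ → ℝ} {b M : ℝ} (hu : ∀ s, |u s| ≤ M)
    (hb : ∀ ε > 0, ∀ᶠ t in atTop, |u t - b| ≤ ε) : |b| ≤ M :=
  le_of_forall_pos_le_add fun ε hε => by
    obtain ⟨t, ht⟩ := (hb ε hε).exists
    have := abs_sub_abs_le_abs_sub b (u t)
    rw [abs_sub_comm] at this
    linarith [hu t]

theorem abs_sub_div_mul_le {a b u v η : ℝ} (ha : a ≠ 0) (hu : |u - a| ≤ η) (hv : |v - b| ≤ η) :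
    |v - b / a * u| ≤ (1 + |b / a|) * η := by
  have : v - b / a * u = (v - b) - b / a * (u - a) := by field_simp; ring
  rw [this]
  calc _ ≤ |v - b| + |b / a| * |u - a| := (abs_sub _ _).trans_eq (by rw [abs_mul])
    _ ≤ η + |b / a| * η := by gcongr
    _ = (1 + |b / a|) * η := by ring

theorem tendsto_mul_exp_sub_mul_atTop {C M k T : ℝ} (hk : 0 < k) :
    Tendsto (fun t => C * Real.exp (M * T - k * (t - T))) atTop (𝓝 0) := by
  have : Tendsto (fun t => M * T - k * (t - T)) atTop atBot :=
    tendsto_atBot_add_const_left atTop (M * T) (tendsto_neg_atTop_atBot.comp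
      ((tendsto_atTop_add_const_right atTop (-T) tendsto_id).const_mul_atTop hk))
  simpa using (Real.tendsto_exp_atBot.comp this).const_mul C

theorem abs_duhamel_sub_div_le {g p : ℝ → ℝ} {φ a b M R η k T t : ℝ} (hg : Continuous g)
    (hp : Continuous p) (hgM : ∀ s, |g s| ≤ M) (hpM : ∀ s, |p s| ≤ M) (hk : 0 < k)
    (ha : a ≤ -(2 * k)) (hr : |b / a| ≤ R) (hηk : η ≤ k) (hT : 0 ≤ T) (hTt : T ≤ t)
    (hconv : ∀ s, T ≤ s → |g s - a| ≤ η ∧ |p s - b| ≤ η) :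
    |duhamel φ g p t - b / a|
      ≤ (|φ| + R + T * (M + R * M)) * Real.exp (M * T - k * (t - T)) + (1 + R) * η / k := by
  have hR : 0 ≤ R := (abs_nonneg _).trans hr
  have hneg : ∀ s, T ≤ s → g s ≤ -k := fun s hs => by
    linarith [(abs_le.1 (hconv s hs).1).2]
  have hq : ∀ s, T ≤ s → |p s - b / a * g s| ≤ (1 + R) * η := fun s hs =>
    (abs_sub_div_mul_le (by linarith) (hconv s hs).1 (hconv s hs).2).trans
      (by gcongr; exact (abs_nonneg _).trans (hconv s hs).1)
  have hqB : ∀ s, |p s - b / a * g s| ≤ M + R * M := fun s =>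
    calc _ ≤ |p s| + |b / a| * |g s| := (abs_sub _ _).trans_eq (by rw [abs_mul])
      _ ≤ M + R * M := add_le_add (hpM s) (mul_le_mul hr (hgM s) (abs_nonneg _) hR)
  rw [duhamel_sub_const hg hp]
  calc _ ≤ (|φ - b / a| + T * (M + R * M)) * Real.exp (M * T - k * (t - T)) + (1 + R) * η / k :=
        abs_duhamel_le hg (hp.sub (continuous_const.mul hg)) hk hT hTt hgM hqB hneg hq
    _ ≤ _ := by gcongr; exact (abs_sub _ _).trans (add_le_add le_rfl hr)

theorem duhamel_tendsto_uniformly {ι : Type*} {K : Set ι} {g p : ι → ℝ → ℝ} {a b φ : ι → ℝ}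
    {M c₀ Φ : ℝ} (hg : ∀ x ∈ K, Continuous (g x)) (hp : ∀ x ∈ K, Continuous (p x))
    (hbd : ∀ x ∈ K, ∀ s, |g x s| ≤ M ∧ |p x s| ≤ M) (hc₀ : 0 < c₀) (ha : ∀ x ∈ K, a x ≤ -c₀)
    (hφ : ∀ x ∈ K, |φ x| ≤ Φ) (hgconv : ∀ ε > 0, ∀ᶠ t in atTop, ∀ x ∈ K, |g x t - a x| ≤ ε)
    (hpconv : ∀ ε > 0, ∀ᶠ t in atTop, ∀ x ∈ K, |p x t - b x| ≤ ε) :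
    ∀ ε > 0, ∀ᶠ t in atTop, ∀ x ∈ K, |duhamel (φ x) (g x) (p x) t - b x / a x| ≤ ε := by
  intro ε hε
  set R := |M| / c₀
  have hr : ∀ x ∈ K, |b x / a x| ≤ R := fun x hx => by
    have hb := abs_le_of_eventually_abs_sub_le (fun s => (hbd x hx s).2)
      fun ε hε => (hpconv ε hε).mono fun t ht => ht x hx
    rw [abs_div, abs_of_neg ((ha x hx).trans_lt (neg_neg_of_pos hc₀))]
    exact div_le_div₀ (abs_nonneg M) (hb.trans (le_abs_self M)) hc₀ (by linarith [ha x hx])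
  set k := c₀ / 2 with hk_def
  have hk : 0 < k := by positivity
  have hR : 0 < 1 + R := by positivity
  set η := min k (ε * k / (2 * (1 + R)))
  have hη : 0 < η := lt_min hk (by positivity)
  have htail : (1 + R) * η / k ≤ ε / 2 := by
    rw [div_le_iff₀ hk]
    calc (1 + R) * η ≤ (1 + R) * (ε * k / (2 * (1 + R))) :=
          mul_le_mul_of_nonneg_left (min_le_right _ _) hR.le
      _ = ε / 2 * k := by field_simp
  obtain ⟨T, hT⟩ := eventually_atTop.1 ((hgconv η hη).and (hpconv η hη))
  set T₀ := max T 0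
  filter_upwards [eventually_ge_atTop T₀, (tendsto_mul_exp_sub_mul_atTop
      (C := Φ + R + T₀ * (M + R * M)) (M := M) (T := T₀) hk).eventually
      (ge_mem_nhds (half_pos hε))] with t htT hsmall x hx
  calc _ ≤ (|φ x| + R + T₀ * (M + R * M)) * Real.exp (M * T₀ - k * (t - T₀))
        + (1 + R) * η / k :=
        abs_duhamel_sub_div_le (hg x hx) (hp x hx) (fun s => (hbd x hx s).1)
          (fun s => (hbd x hx s).2) hk (by linarith [ha x hx]) (hr x hx) (min_le_left _ _)
          (le_max_right T 0) htT fun s hs =>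
            ⟨(hT s (le_of_max_le_left hs)).1 x hx, (hT s (le_of_max_le_left hs)).2 x hx⟩
    _ ≤ (Φ + R + T₀ * (M + R * M)) * Real.exp (M * T₀ - k * (t - T₀)) + ε / 2 := by
        gcongr
        exact hφ x hx
    _ ≤ ε := by linarith

theorem stmt_7_general {n : ℕ}
    (Ω : Set (EuclideanSpace ℝ (Fin n)))
    (hΩbdd : Bornology.IsBounded Ω)
    (c f : EuclideanSpace ℝ (Fin n) → ℝ → ℝ)
    (cbar fbar φ : EuclideanSpace ℝ (Fin n) → ℝ)
    (hcCont : ContinuousOn (fun p : EuclideanSpace ℝ (Fin n) × ℝ => c p.1 p.2)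
      ((frontier Ω) ×ˢ Ici 0))
    (hfCont : ContinuousOn (fun p : EuclideanSpace ℝ (Fin n) × ℝ => f p.1 p.2)
      ((frontier Ω) ×ˢ Ici 0))
    (M : ℝ)
    (hbd : ∀ x ∈ frontier Ω, ∀ t : ℝ, 0 ≤ t → |c x t| ≤ M ∧ |f x t| ≤ M)
    (hcbar : ContinuousOn cbar (frontier Ω))
    (hφ : ContinuousOn φ (frontier Ω))
    (hcbarneg : ∀ x ∈ frontier Ω, cbar x < 0)
    (hcconv : ∀ ε > 0, ∃ T : ℝ, ∀ t ≥ T, ∀ x ∈ frontier Ω, |c x t - cbar x| ≤ ε)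
    (hfconv : ∀ ε > 0, ∃ T : ℝ, ∀ t ≥ T, ∀ x ∈ frontier Ω, |f x t - fbar x| ≤ ε)
    (h : EuclideanSpace ℝ (Fin n) → ℝ → ℝ)
    (hdef : ∀ x t, h x t = φ x * Real.exp (∫ s in (0:ℝ)..t, c x s)
      - ∫ s in (0:ℝ)..t, Real.exp (∫ τ in s..t, c x τ) * f x s) :
    ∀ ε > 0, ∃ T : ℝ, ∀ t ≥ T, ∀ x ∈ frontier Ω,
      |h x t - fbar x / cbar x| ≤ ε := by
  have hK : IsCompact (frontier Ω) := Metric.isCompact_of_isClosed_isBounded isClosed_frontier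
    (hΩbdd.closure.subset frontier_subset_closure)
  obtain ⟨c₀, hc₀, hc₀_le⟩ := hK.exists_forall_le' hcbar.neg fun x hx => neg_pos.2 (hcbarneg x hx)
  obtain ⟨Φ, hΦ⟩ := hK.exists_bound_of_continuousOn hφ
  -- only the values at `s ≥ 0` matter, so extend `c x` and `f x` continuously to all of `ℝ`
  set g := fun x s => c x (max s 0)
  set p := fun x s => f x (max s 0)
  have hmax : Continuous fun s : ℝ => max s 0 := continuous_id.max continuous_const
  have hslice : ∀ x ∈ frontier Ω, ∀ s : ℝ, (x, max s 0) ∈ frontier Ω ×ˢ Ici 0 :=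
    fun x hx s => ⟨hx, le_max_right s 0⟩
  have hlim := duhamel_tendsto_uniformly (g := g) (p := p) (a := cbar) (b := fbar) (φ := φ)
    (fun x hx => hcCont.comp_continuous (continuous_const.prodMk hmax) (hslice x hx))
    (fun x hx => hfCont.comp_continuous (continuous_const.prodMk hmax) (hslice x hx))
    (fun x hx s => hbd x hx _ (le_max_right s 0)) hc₀ (fun x hx => le_neg.1 (hc₀_le x hx)) hΦ
    (fun ε hε => ((eventually_atTop.2 (hcconv ε hε)).and (eventually_ge_atTop 0)).mono
      fun t ⟨ht, ht₀⟩ x hx => by simpa [g, max_eq_left ht₀] using ht x hx)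
    (fun ε hε => ((eventually_atTop.2 (hfconv ε hε)).and (eventually_ge_atTop 0)).mono
      fun t ⟨ht, ht₀⟩ x hx => by simpa [p, max_eq_left ht₀] using ht x hx)
  intro ε hε
  refine eventually_atTop.1 (((hlim ε hε).and (eventually_ge_atTop 0)).mono
    fun t ⟨ht, ht₀⟩ x hx => ?_)
  have hclamp : ∀ u : ℝ → ℝ, ∀ s ∈ Icc 0 t, u s = u (max s 0) := fun u s hs => by
    rw [max_eq_left hs.1]
  rw [hdef, ← duhamel, duhamel_congr ht₀ (hclamp (c x)) (hclamp (f x))]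
  exact ht x hx

/-- Convergence of the boundary values: if `c(·,t) → c̄` and `f(·,t) → f̄` in
`L^∞(∂Ω)` with `c̄ < 0` on `∂Ω`, then `h(·,t) → f̄/c̄` in `L^∞(∂Ω)` as `t → ∞`. -/
theorem stmt_7 {n : ℕ}
    (Ω : Set (EuclideanSpace ℝ (Fin n)))
    (hΩopen : IsOpen Ω) (hΩbdd : Bornology.IsBounded Ω) (hΩne : Ω.Nonempty)
    (c f : EuclideanSpace ℝ (Fin n) → ℝ → ℝ)
    (cbar fbar φ : EuclideanSpace ℝ (Fin n) → ℝ)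
    (hcCont : ContinuousOn (fun p : EuclideanSpace ℝ (Fin n) × ℝ => c p.1 p.2)
      ((frontier Ω) ×ˢ Ici 0))
    (hfCont : ContinuousOn (fun p : EuclideanSpace ℝ (Fin n) × ℝ => f p.1 p.2)
      ((frontier Ω) ×ˢ Ici 0))
    (M : ℝ)
    (hbd : ∀ x ∈ frontier Ω, ∀ t : ℝ, 0 ≤ t → |c x t| ≤ M ∧ |f x t| ≤ M)
    (hcbar : ContinuousOn cbar (frontier Ω))
    (hfbar : ContinuousOn fbar (frontier Ω))
    (hφ : ContinuousOn φ (frontier Ω))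
    (hcbarneg : ∀ x ∈ frontier Ω, cbar x < 0)
    (hcconv : ∀ ε > 0, ∃ T : ℝ, ∀ t ≥ T, ∀ x ∈ frontier Ω, |c x t - cbar x| ≤ ε)
    (hfconv : ∀ ε > 0, ∃ T : ℝ, ∀ t ≥ T, ∀ x ∈ frontier Ω, |f x t - fbar x| ≤ ε)
    (h : EuclideanSpace ℝ (Fin n) → ℝ → ℝ)
    (hdef : ∀ x t, h x t = φ x * Real.exp (∫ s in (0:ℝ)..t, c x s)
      - ∫ s in (0:ℝ)..t, Real.exp (∫ τ in s..t, c x τ) * f x s) :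
    ∀ ε > 0, ∃ T : ℝ, ∀ t ≥ T, ∀ x ∈ frontier Ω,
      |h x t - fbar x / cbar x| ≤ ε :=
  stmt_7_general Ω hΩbdd c f cbar fbar φ hcCont hfCont M hbd hcbar hφ hcbarneg hcconv hfconv h hdef

end
end

section
/- Let $\Omega\subset\{0<x_1<r\}$ be a bounded domain in $\mathbb{R}^n$, $\rho$ a $C^1(\bar\Omega)$ defining function, and $z(x) = r^2(e^{2\mu} - e^{\mu x_1/r})$. Let $Lu = \rho^2 a_{ij}\partial_{ij}u + \rho b_i\partial_i u + cu - \partial_t u$ with bounded continuous coefficients and $a_{ij}$ uniformly elliptic with constant $\lambda$. Assume there exist $\rho_0,c_0,T_1>0$ with $c\le -c_0$ on $\{0\le\rho\le\rho_0\}\cap(Q\setminus Q_{T_1})$ and $\limsup_{t\to\infty}\sup_{\bar\Omega} c\le 0$. Then there exist $\mu>0$ and $T_0>T_1$ such that $Lz \le -1$ on $Q\setminus Q_{T_0} = \Omega\times(T_0,\infty)$. -/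
/-!
The barrier depends on `x₁` only, so
`Lz = -e^{μx₁/r} (ρ² a₁₁ μ² + r ρ b₁ μ) + c r² (e^{2μ} - e^{μx₁/r})`.
Where `ρ ≤ ρ₀` the reaction term is at most `-c₀ r² (e^{2μ} - e^μ)`, whose growth `e^{2μ}`
beats the drift term `O(μ e^μ)`. Where `ρ ≥ ρ₀` ellipticity makes the diffusion term
`≤ -ρ² λ μ² e^{μx₁/r}` dominate the drift, and for `t` large `c ≤ 1 / (r² e^{2μ})` keeps the
reaction term below `1`. Both conditions on `μ` hold for `μ` large since quadratics beat
linear functions.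
-/

open Set

noncomputable section

open Filter Real

section CoordinateFunctions

variable {n : ℕ} {φ φ' φ'' : ℝ → ℝ} (k : Fin n)

lemma spd_comp_coord (hφ : ∀ s, HasDerivAt φ (φ' s) s) (i : Fin n) :
    spd (fun y : EuclideanSpace ℝ (Fin n) => φ (y k)) i
      = fun x => if i = k then φ' (x k) else 0 := by
  funext x
  have hproj : HasFDerivAt (fun y : EuclideanSpace ℝ (Fin n) => φ (y k))
      (φ' (x k) • EuclideanSpace.proj (𝕜 := ℝ) k) x :=
    (hφ (x k)).comp_hasFDerivAt x (EuclideanSpace.proj (𝕜 := ℝ) k).hasFDerivAt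
  simp [spd, hproj.fderiv, eq_comm]

lemma sum_mul_spd_comp_coord (hφ : ∀ s, HasDerivAt φ (φ' s) s) (b : Fin n → ℝ)
    (x : EuclideanSpace ℝ (Fin n)) :
    ∑ i, b i * spd (fun y : EuclideanSpace ℝ (Fin n) => φ (y k)) i x = b k * φ' (x k) := by
  simp [spd_comp_coord k hφ]

lemma sum_sum_mul_spd_spd_comp_coord (hφ : ∀ s, HasDerivAt φ (φ' s) s)
    (hφ' : ∀ s, HasDerivAt φ' (φ'' s) s) (a : Fin n → Fin n → ℝ)
    (x : EuclideanSpace ℝ (Fin n)) :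
    ∑ i, ∑ j, a i j * spd (spd (fun y : EuclideanSpace ℝ (Fin n) => φ (y k)) j) i x
      = a k k * φ'' (x k) := by
  have hspd_spd (j : Fin n) : spd (spd (fun y : EuclideanSpace ℝ (Fin n) => φ (y k)) j)
      = fun i x => if j = k then (if i = k then φ'' (x k) else 0) else 0 := by
    funext i x
    by_cases hj : j = k
    · simp [hj, spd_comp_coord k hφ, spd_comp_coord k hφ']
    · simp [hj, spd_comp_coord k hφ, spd]
  simp [hspd_spd]

end CoordinateFunctions

lemma le_diag_of_le_quadForm {n : ℕ} {a : Fin n → Fin n → ℝ} {lam : ℝ}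
    (h : ∀ ξ : Fin n → ℝ, lam * ∑ i, ξ i ^ 2 ≤ ∑ i, ∑ j, a i j * ξ i * ξ j) (k : Fin n) :
    lam ≤ a k k := by
  simpa [Pi.single_apply] using h (Pi.single k 1)

section Barrier

variable {r μ : ℝ}

lemma hasDerivAt_mul_div_const (s : ℝ) : HasDerivAt (fun s => μ * s / r) (μ / r) s := by
  simpa using ((hasDerivAt_id s).const_mul μ).div_const r

lemma hasDerivAt_barrierProfile (hr : r ≠ 0) (s : ℝ) :
    HasDerivAt (fun s => r ^ 2 * (exp (2 * μ) - exp (μ * s / r)))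
      (-(r * μ) * exp (μ * s / r)) s :=
  (((hasDerivAt_mul_div_const s).exp.const_sub _).const_mul _).congr_deriv (by field_simp)

lemma hasDerivAt_deriv_barrierProfile (hr : r ≠ 0) (s : ℝ) :
    HasDerivAt (fun s => -(r * μ) * exp (μ * s / r)) (-(μ ^ 2) * exp (μ * s / r)) s :=
  ((hasDerivAt_mul_div_const s).exp.const_mul _).congr_deriv (by field_simp)

lemma barrier_le_of_near_boundary {ρ ρ0 a b c c0 M E : ℝ} (hρ : 0 ≤ ρ) (hρρ0 : ρ ≤ ρ0)
    (ha : 0 ≤ a) (hb : |b| ≤ M) (hc0 : 0 ≤ c0) (hc : c ≤ -c0) (hr : 0 < r) (hμ : 0 < μ)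
    (hE0 : 0 ≤ E) (hE : E ≤ exp μ) (hμK : ρ0 * M * r * μ + 1 ≤ c0 * r ^ 2 * (exp μ - 1)) :
    ρ ^ 2 * (a * (-(μ ^ 2) * E)) + ρ * (b * (-(r * μ) * E))
      + c * (r ^ 2 * (exp (2 * μ) - E)) ≤ -1 := by
  have hexp : exp (2 * μ) = exp μ * exp μ := by rw [← exp_add]; ring_nf
  have hdiff : r ^ 2 * (exp (2 * μ) - exp μ) ≤ r ^ 2 * (exp (2 * μ) - E) := by gcongr
  have hdiff0 : 0 ≤ r ^ 2 * (exp (2 * μ) - exp μ) := by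
    have := one_le_exp hμ.le
    rw [hexp, show exp μ * exp μ - exp μ = exp μ * (exp μ - 1) by ring]
    have : 0 ≤ exp μ - 1 := by linarith
    positivity
  have hdiffusion : ρ ^ 2 * (a * (-(μ ^ 2) * E)) ≤ 0 := by
    have : 0 ≤ ρ ^ 2 * (a * (μ ^ 2 * E)) := by positivity
    linarith
  have hdrift : ρ * (b * (-(r * μ) * E)) ≤ ρ0 * M * r * μ * exp μ := by
    have hrμ : 0 ≤ r * μ := by positivity
    calc ρ * (b * (-(r * μ) * E)) = -b * (ρ * (r * μ) * E) := by ring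
      _ ≤ M * (ρ0 * (r * μ) * exp μ) := by
        have hM : 0 ≤ M := (abs_nonneg b).trans hb
        have hρ0nonneg : 0 ≤ ρ0 := hρ.trans hρρ0
        gcongr
        exact (neg_le_abs b).trans hb
      _ = ρ0 * M * r * μ * exp μ := by ring
  have hreaction : c * (r ^ 2 * (exp (2 * μ) - E)) ≤ -c0 * (r ^ 2 * (exp (2 * μ) - exp μ)) :=
    calc c * (r ^ 2 * (exp (2 * μ) - E)) ≤ -c0 * (r ^ 2 * (exp (2 * μ) - E)) := by
          gcongr; exact hdiff0.trans hdiff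
      _ ≤ -c0 * (r ^ 2 * (exp (2 * μ) - exp μ)) := mul_le_mul_of_nonpos_left hdiff (by linarith)
  have hfactor : ρ0 * M * r * μ * exp μ - c0 * (r ^ 2 * (exp (2 * μ) - exp μ))
      = exp μ * (ρ0 * M * r * μ - c0 * r ^ 2 * (exp μ - 1)) := by
    rw [hexp]; ring
  have hneg : exp μ * (ρ0 * M * r * μ - c0 * r ^ 2 * (exp μ - 1)) ≤ -1 := by
    nlinarith [one_le_exp hμ.le]
  linarith

lemma barrier_le_of_interior {ρ ρ0 a b c lam M E : ℝ} (hρ0 : 0 < ρ0) (hρ : ρ0 ≤ ρ)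
    (ha : lam ≤ a) (hb : |b| ≤ M) (hc : c * (r ^ 2 * exp (2 * μ)) ≤ 1) (hr : 0 < r)
    (hμ : 0 < μ) (hE1 : 1 ≤ E) (hE : E ≤ exp μ)
    (hμK : 2 + ρ0 * M * r * μ ≤ ρ0 ^ 2 * lam * μ ^ 2) :
    ρ ^ 2 * (a * (-(μ ^ 2) * E)) + ρ * (b * (-(r * μ) * E))
      + c * (r ^ 2 * (exp (2 * μ) - E)) ≤ -1 := by
  have hM : 0 ≤ M := (abs_nonneg b).trans hb
  have hρ' : 0 ≤ ρ := hρ0.le.trans hρ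
  have hρ0lam : M * r < ρ0 * lam * μ := by
    have h : 0 < ρ0 * μ * (ρ0 * lam * μ - M * r) := by linarith
    linarith [(mul_pos_iff_of_pos_left (by positivity)).mp h]
  have hlam : 0 < lam := by
    have h : 0 < ρ0 * μ * lam := by nlinarith [mul_nonneg hM hr.le]
    exact (mul_pos_iff_of_pos_left (by positivity)).mp h
  have hquad : 2 ≤ ρ ^ 2 * lam * μ ^ 2 - ρ * M * r * μ := by
    have : 0 ≤ (ρ - ρ0) * μ * ((ρ + ρ0) * lam * μ - M * r) := by
      have : 0 ≤ ρ * lam * μ := by positivity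
      have : 0 ≤ (ρ + ρ0) * lam * μ - M * r := by linarith
      exact mul_nonneg (mul_nonneg (by linarith) hμ.le) this
    nlinarith
  have hprincipal : ρ ^ 2 * (a * (-(μ ^ 2) * E)) + ρ * (b * (-(r * μ) * E))
      ≤ -E * (ρ ^ 2 * lam * μ ^ 2 - ρ * M * r * μ) := by
    have hdiffusion : ρ ^ 2 * lam * μ ^ 2 * E ≤ ρ ^ 2 * a * μ ^ 2 * E := by gcongr
    have hdrift : -b * (ρ * r * μ * E) ≤ M * (ρ * r * μ * E) := by
      gcongr; exact (neg_le_abs b).trans hb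
    linarith
  have hreaction : c * (r ^ 2 * (exp (2 * μ) - E)) ≤ 1 := by
    have hEexp : E ≤ exp (2 * μ) := hE.trans (exp_le_exp.mpr (by linarith))
    rcases le_or_gt c 0 with hc0 | hc0
    · have : 0 ≤ r ^ 2 * (exp (2 * μ) - E) := mul_nonneg (sq_nonneg r) (by linarith)
      nlinarith
    · calc c * (r ^ 2 * (exp (2 * μ) - E)) ≤ c * (r ^ 2 * exp (2 * μ)) := by gcongr; linarith
        _ ≤ 1 := hc
  have := mul_le_mul_of_nonneg_left hquad (zero_le_one.trans hE1)
  linarith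

end Barrier

lemma eventually_add_le_mul_sq {A : ℝ} (hA : 0 < A) (K C : ℝ) :
    ∀ᶠ μ in atTop, K * μ + C ≤ A * μ ^ 2 := by
  filter_upwards [eventually_ge_atTop (max 1 ((|K| + |C|) / A))] with μ hμ
  have hμ1 : 1 ≤ μ := (le_max_left _ _).trans hμ
  have hμA : |K| + |C| ≤ A * μ := by
    rw [mul_comm]; exact (div_le_iff₀ hA).mp ((le_max_right _ _).trans hμ)
  calc K * μ + C ≤ |K| * μ + |C| * μ := by
        gcongr
        · exact le_abs_self K
        · exact (le_abs_self C).trans (le_mul_of_one_le_right (abs_nonneg C) hμ1)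
    _ = (|K| + |C|) * μ := by ring
    _ ≤ A * μ * μ := by gcongr
    _ = A * μ ^ 2 := by ring

lemma exists_barrier_exponent {A B K : ℝ} (hA : 0 < A) (hB : 0 < B) :
    ∃ μ > 0, K * μ + 1 ≤ A * (exp μ - 1) ∧ 2 + K * μ ≤ B * μ ^ 2 := by
  obtain ⟨μ, hμ, hexp, hquad⟩ := ((eventually_gt_atTop 0).and
    ((eventually_add_le_mul_sq (half_pos hA) K 1).and (eventually_add_le_mul_sq hB K 2))).exists
  refine ⟨μ, hμ, ?_, by linarith⟩
  calc K * μ + 1 ≤ A / 2 * μ ^ 2 := hexp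
    _ ≤ A * (exp μ - 1) := by nlinarith [quadratic_le_exp_of_nonneg hμ.le]

theorem stmt_13_general {n : ℕ} (hn : 0 < n)
    (r : ℝ) (hr : 0 < r)
    (Ω : Set (EuclideanSpace ℝ (Fin n)))
    (hslab : ∀ x ∈ Ω, 0 < x ⟨0, hn⟩ ∧ x ⟨0, hn⟩ < r)
    (ρ : EuclideanSpace ℝ (Fin n) → ℝ)
    (hρpos : ∀ x ∈ Ω, 0 < ρ x)
    (a : Fin n → Fin n → EuclideanSpace ℝ (Fin n) → ℝ → ℝ)
    (b : Fin n → EuclideanSpace ℝ (Fin n) → ℝ → ℝ)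
    (c : EuclideanSpace ℝ (Fin n) → ℝ → ℝ)
    (M : ℝ)
    (hbdd : ∀ x ∈ closure Ω, ∀ t : ℝ, 0 ≤ t →
      (∀ i j, |a i j x t| ≤ M) ∧ (∀ i, |b i x t| ≤ M) ∧ |c x t| ≤ M)
    (lam Lam : ℝ) (hlam : 0 < lam)
    (hell : ∀ x ∈ closure Ω, ∀ t : ℝ, 0 ≤ t → ∀ ξ : Fin n → ℝ,
      lam * ∑ i, ξ i ^ 2 ≤ ∑ i, ∑ j, a i j x t * ξ i * ξ j ∧
      ∑ i, ∑ j, a i j x t * ξ i * ξ j ≤ Lam * ∑ i, ξ i ^ 2)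
    -- `c ≤ -c₀` on `{0 ≤ ρ ≤ ρ₀} ∩ (Q \ Q_{T₁})`
    (ρ0 c0 T1 : ℝ) (hρ0pos : 0 < ρ0) (hc0 : 0 < c0) (hT1 : 0 < T1)
    (hcneg : ∀ x ∈ closure Ω, ∀ t : ℝ, T1 < t → ρ x ≤ ρ0 → c x t ≤ -c0)
    -- `limsup_{t→∞} sup_Ω c ≤ 0`
    (hclim : ∀ ε > 0, ∃ T : ℝ, ∀ t ≥ T, ∀ x ∈ closure Ω, c x t ≤ ε) :
    ∃ μ > 0, ∃ T0 > T1, ∀ x ∈ Ω, ∀ t : ℝ, T0 < t →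
      ρ x ^ 2 * ∑ i, ∑ j, a i j x t *
          spd (spd (fun y => r ^ 2 * (Real.exp (2 * μ) - Real.exp (μ * y ⟨0, hn⟩ / r))) j) i x
        + ρ x * ∑ i, b i x t *
          spd (fun y => r ^ 2 * (Real.exp (2 * μ) - Real.exp (μ * y ⟨0, hn⟩ / r))) i x
        + c x t * (r ^ 2 * (Real.exp (2 * μ) - Real.exp (μ * x ⟨0, hn⟩ / r)))
        - deriv (fun _ : ℝ => r ^ 2 * (Real.exp (2 * μ) - Real.exp (μ * x ⟨0, hn⟩ / r))) t
      ≤ -1 := by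
  obtain ⟨μ, hμ, hμnear, hμint⟩ :=
    exists_barrier_exponent (K := ρ0 * M * r) (mul_pos hc0 (pow_pos hr 2))
      (mul_pos (pow_pos hρ0pos 2) hlam)
  obtain ⟨T, hT⟩ := hclim (1 / (r ^ 2 * exp (2 * μ))) (by positivity)
  refine ⟨μ, hμ, max T T1 + 1, by linarith [le_max_right T T1], fun x hx t ht => ?_⟩
  have hxcl := subset_closure hx
  have htT1 : T1 < t := by linarith [le_max_right T T1]
  have ht0 : 0 ≤ t := by linarith
  rw [sum_sum_mul_spd_spd_comp_coord _ (hasDerivAt_barrierProfile hr.ne')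
      (hasDerivAt_deriv_barrierProfile hr.ne'),
    sum_mul_spd_comp_coord _ (hasDerivAt_barrierProfile hr.ne'), deriv_const, sub_zero]
  obtain ⟨hx0, hxr⟩ := hslab x hx
  have hE1 : 1 ≤ exp (μ * x ⟨0, hn⟩ / r) := one_le_exp (by positivity)
  have hEμ : exp (μ * x ⟨0, hn⟩ / r) ≤ exp μ := by
    rw [exp_le_exp, div_le_iff₀ hr]; gcongr
  have hb := (hbdd x hxcl t ht0).2.1 ⟨0, hn⟩
  have ha := le_diag_of_le_quadForm (fun ξ => (hell x hxcl t ht0 ξ).1) ⟨0, hn⟩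
  rcases le_or_gt (ρ x) ρ0 with hnear | hint
  · exact barrier_le_of_near_boundary (hρpos x hx).le hnear (hlam.le.trans ha) hb hc0.le
      (hcneg x hxcl t htT1 hnear) hr hμ (by positivity) hEμ (by linarith)
  · refine barrier_le_of_interior hρ0pos hint.le ha hb ?_ hr hμ hE1 hEμ (by linarith)
    have hc := hT t (by linarith [le_max_left T T1]) x hxcl
    rwa [le_div_iff₀ (by positivity)] at hc

/-- There exist `μ > 0` and `T₀ > T₁` such that the barrier
`z(x) = r²(e^{2μ} - e^{μ x₁/r})` satisfies `Lz ≤ -1` on `Ω × (T₀,∞)`. -/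
theorem stmt_13 {n : ℕ} (hn : 0 < n)
    (r : ℝ) (hr : 0 < r)
    (Ω : Set (EuclideanSpace ℝ (Fin n)))
    (hΩopen : IsOpen Ω) (hΩbdd : Bornology.IsBounded Ω) (hΩne : Ω.Nonempty)
    (hslab : ∀ x ∈ Ω, 0 < x ⟨0, hn⟩ ∧ x ⟨0, hn⟩ < r)
    (ρ : EuclideanSpace ℝ (Fin n) → ℝ)
    (hρC1 : ContDiffOn ℝ 1 ρ (closure Ω))
    (hρpos : ∀ x ∈ Ω, 0 < ρ x)
    (hρ0 : ∀ x ∈ frontier Ω, ρ x = 0)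
    (a : Fin n → Fin n → EuclideanSpace ℝ (Fin n) → ℝ → ℝ)
    (b : Fin n → EuclideanSpace ℝ (Fin n) → ℝ → ℝ)
    (c : EuclideanSpace ℝ (Fin n) → ℝ → ℝ)
    (haCont : ∀ i j, ContinuousOn (fun p : EuclideanSpace ℝ (Fin n) × ℝ => a i j p.1 p.2)
      (closure Ω ×ˢ Ici 0))
    (hbCont : ∀ i, ContinuousOn (fun p : EuclideanSpace ℝ (Fin n) × ℝ => b i p.1 p.2)
      (closure Ω ×ˢ Ici 0))
    (hcCont : ContinuousOn (fun p : EuclideanSpace ℝ (Fin n) × ℝ => c p.1 p.2)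
      (closure Ω ×ˢ Ici 0))
    (hsymm : ∀ i j x t, a i j x t = a j i x t)
    (M : ℝ)
    (hbdd : ∀ x ∈ closure Ω, ∀ t : ℝ, 0 ≤ t →
      (∀ i j, |a i j x t| ≤ M) ∧ (∀ i, |b i x t| ≤ M) ∧ |c x t| ≤ M)
    (lam Lam : ℝ) (hlam : 0 < lam) (hLam : 0 < Lam)
    (hell : ∀ x ∈ closure Ω, ∀ t : ℝ, 0 ≤ t → ∀ ξ : Fin n → ℝ,
      lam * ∑ i, ξ i ^ 2 ≤ ∑ i, ∑ j, a i j x t * ξ i * ξ j ∧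
      ∑ i, ∑ j, a i j x t * ξ i * ξ j ≤ Lam * ∑ i, ξ i ^ 2)
    -- `c ≤ -c₀` on `{0 ≤ ρ ≤ ρ₀} ∩ (Q \ Q_{T₁})`
    (ρ0 c0 T1 : ℝ) (hρ0pos : 0 < ρ0) (hc0 : 0 < c0) (hT1 : 0 < T1)
    (hcneg : ∀ x ∈ closure Ω, ∀ t : ℝ, T1 < t → ρ x ≤ ρ0 → c x t ≤ -c0)
    -- `limsup_{t→∞} sup_Ω c ≤ 0`
    (hclim : ∀ ε > 0, ∃ T : ℝ, ∀ t ≥ T, ∀ x ∈ closure Ω, c x t ≤ ε) :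
    ∃ μ > 0, ∃ T0 > T1, ∀ x ∈ Ω, ∀ t : ℝ, T0 < t →
      ρ x ^ 2 * ∑ i, ∑ j, a i j x t *
          spd (spd (fun y => r ^ 2 * (Real.exp (2 * μ) - Real.exp (μ * y ⟨0, hn⟩ / r))) j) i x
        + ρ x * ∑ i, b i x t *
          spd (fun y => r ^ 2 * (Real.exp (2 * μ) - Real.exp (μ * y ⟨0, hn⟩ / r))) i x
        + c x t * (r ^ 2 * (Real.exp (2 * μ) - Real.exp (μ * x ⟨0, hn⟩ / r)))
        - deriv (fun _ : ℝ => r ^ 2 * (Real.exp (2 * μ) - Real.exp (μ * x ⟨0, hn⟩ / r))) t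
      ≤ -1 :=
  stmt_13_general hn r hr Ω hslab ρ hρpos a b c M hbdd lam Lam hlam hell ρ0 c0 T1 hρ0pos hc0 hT1
    hcneg hclim

end
end
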